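/- arXiv:1412.1497 — 12 statements merged into one kernel-verified Lean document; each statement's English description precedes it below -/
import Mathlib

section
/- If G is a topological group with a countable cn-network at the identity element and G is separable, then G has a countable cn-network (i.e., G is cosmic if additionally regular). -/
open Filter Set Topology Pointwise Bornology

section Defs

variable {X : Type*} [TopologicalSpace X]

/-- `N` is a network at `x`: every neighborhood of `x` contains a member of `N` containing `x`. -/
def IsNetworkAt (N : Set (Set X)) (x : X) : Prop :=
  ∀ O ∈ nhds x, ∃ n ∈ N, x ∈ n ∧ n ⊆ O

/-- `N` is a `cn`-network at `x`. -/
def IsCnNetworkAt (N : Set (Set X)) (x : X) : Prop :=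
  ∀ O ∈ nhds x, (⋃₀ {n | n ∈ N ∧ x ∈ n ∧ n ⊆ O}) ∈ nhds x

/-- `N` is a `cp`-network (Pytkeev network with `x ∈ N`) at `x`. -/
def IsCpNetworkAt (N : Set (Set X)) (x : X) : Prop :=
  IsNetworkAt N x ∧
  ∀ A : Set X, x ∈ closure A \ A → ∀ O ∈ nhds x,
    ∃ n ∈ N, x ∈ n ∧ n ⊆ O ∧ (n ∩ A).Infinite

/-- `N` is a `ck`-network at `x`. -/
def IsCkNetworkAt (N : Set (Set X)) (x : X) : Prop :=
  ∀ O ∈ nhds x, ∃ U ∈ nhds x, ∀ K : Set X, K ⊆ U → IsCompact K →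
    ∃ F : Finset (Set X), ↑F ⊆ N ∧ (∀ f ∈ F, x ∈ f) ∧
      K ⊆ ⋃₀ ↑F ∧ ⋃₀ (↑F : Set (Set X)) ⊆ O

/-- `N` is a `cs*`-network at `x`. -/
def IsCsStarNetworkAt (N : Set (Set X)) (x : X) : Prop :=
  ∀ u : ℕ → X, Tendsto u atTop (nhds x) → ∀ O ∈ nhds x,
    ∃ n ∈ N, x ∈ n ∧ n ⊆ O ∧ {k | u k ∈ n}.Infinite

/-- `N` is a network for the topology of `X`. -/
def IsNetwork (N : Set (Set X)) : Prop :=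
  ∀ O : Set X, IsOpen O → ∀ x ∈ O, ∃ n ∈ N, x ∈ n ∧ n ⊆ O

/-- The set `D_k(α)`: the intersection of all `U β` over `β ∈ M` agreeing with `α`
on the first `k` coordinates. -/
def Dk (M : Set (ℕ → ℕ)) (U : (ℕ → ℕ) → Set X) (k : ℕ) (α : ℕ → ℕ) : Set X :=
  ⋂ β ∈ {β ∈ M | ∀ i < k, β i = α i}, U β

/-- `{U α : α ∈ M}` is an `M`-decreasing neighborhood base (small base) at `x`. -/
def IsSmallBaseAt (M : Set (ℕ → ℕ)) (U : (ℕ → ℕ) → Set X) (x : X) : Prop :=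
  (∀ α ∈ M, ∀ β ∈ M, α ≤ β → U β ⊆ U α) ∧
  (∀ α ∈ M, U α ∈ nhds x) ∧
  (∀ O ∈ nhds x, ∃ α ∈ M, U α ⊆ O)

/-- `{U α : α ∈ M}` is an `M`-decreasing base of the topology (small base of `X`). -/
def IsSmallBaseTop (M : Set (ℕ → ℕ)) (U : (ℕ → ℕ) → Set X) : Prop :=
  (∀ α ∈ M, ∀ β ∈ M, α ≤ β → U β ⊆ U α) ∧
  (∀ α ∈ M, IsOpen (U α)) ∧
  (∀ O : Set X, IsOpen O → ∀ x ∈ O, ∃ α ∈ M, x ∈ U α ∧ U α ⊆ O)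

/-- Condition (D): `U α = ⋃ₖ D_k(α)` for every `α ∈ M`. -/
def CondD (M : Set (ℕ → ℕ)) (U : (ℕ → ℕ) → Set X) : Prop :=
  ∀ α ∈ M, U α = ⋃ k : ℕ, Dk M U k α

end Defs

/-- The strong Pytkeev property of Tsaban and Zdomskyy. -/
def HasStrongPytkeev (X : Type*) [TopologicalSpace X] : Prop :=
  ∀ x : X, ∃ D : Set (Set X), D.Countable ∧
    ∀ U ∈ nhds x, ∀ A : Set X, x ∈ closure A \ A →
      ∃ d ∈ D, d ⊆ U ∧ (d ∩ A).Infinite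

/-!
Let `D` be a countable dense set. Given `x` and a neighbourhood `O` of `x`, take `V ∈ 𝓝 1` with
`x V V V ⊆ O` and let `S ∈ 𝓝 1` be the union of the members of `N` through `1` inside `V`.
Pick `d ∈ D` with `x⁻¹ d ∈ V` and `z := d⁻¹ x ∈ S`. For every `w ∈ S`, the product of a member
through `1` and `z` with a member through `1` and `w` contains `z` and `z w` and lies in `V V`;
translating by `d`, the countable family `D • (N * N)` is a `cn`-network at `x`.
-/

section CnUnion

variable {X : Type*}

def cnUnion (N : Set (Set X)) (x : X) (O : Set X) : Set X :=
  ⋃₀ {n | n ∈ N ∧ x ∈ n ∧ n ⊆ O}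

theorem cnUnion_mono {N N' : Set (Set X)} {x : X} {O O' : Set X} (hN : N ⊆ N') (hO : O ⊆ O') :
    cnUnion N x O ⊆ cnUnion N' x O' :=
  sUnion_mono fun _ ⟨hn, hxn, hnO⟩ => ⟨hN hn, hxn, hnO.trans hO⟩

theorem smul_cnUnion_subset {G : Type*} [Group G] [MulAction G X] (g : G) (N : Set (Set X))
    (x : X) (O : Set X) :
    g • cnUnion N x O ⊆ cnUnion ((g • ·) '' N) (g • x) (g • O) := by
  rintro _ ⟨y, ⟨n, ⟨hn, hxn, hnO⟩, hyn⟩, rfl⟩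
  exact ⟨g • n, ⟨mem_image_of_mem _ hn, smul_mem_smul_set hxn, smul_set_mono hnO⟩,
    smul_mem_smul_set hyn⟩

end CnUnion

theorem smul_cnUnion_one_subset_cnUnion_mul {M : Type*} [Monoid M] {N : Set (Set M)}
    {U : Set M} {z : M} (hz : z ∈ cnUnion N 1 U) :
    z • cnUnion N 1 U ⊆ cnUnion (image2 (· * ·) N N) z (U * U) := by
  obtain ⟨n₁, ⟨hn₁, hn₁_one, hn₁U⟩, hzn₁⟩ := hz
  rintro _ ⟨w, ⟨n₂, ⟨hn₂, hn₂_one, hn₂U⟩, hwn₂⟩, rfl⟩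
  refine ⟨n₁ * n₂, ⟨mem_image2_of_mem hn₁ hn₂, ?_, mul_subset_mul hn₁U hn₂U⟩,
    mul_mem_mul hzn₁ hwn₂⟩
  simpa using mul_mem_mul hzn₁ hn₂_one

theorem statement0 {G : Type*} [Group G] [TopologicalSpace G] [IsTopologicalGroup G]
    [TopologicalSpace.SeparableSpace G]
    (N : Set (Set G)) (hNc : N.Countable) (hN : IsCnNetworkAt N (1 : G)) :
    ∃ N' : Set (Set G), N'.Countable ∧ ∀ x : G, IsCnNetworkAt N' x := by
  obtain ⟨D, hDc, hD⟩ := TopologicalSpace.exists_countable_dense G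
  set N' := image2 (· • ·) D (image2 (· * ·) N N)
  refine ⟨N', hDc.image2 (hNc.image2 hNc _) _, fun x O hO => ?_⟩
  obtain ⟨V, hV, hVO⟩ := exists_nhds_one_split4 (smul_mem_nhds_self.1 (by rwa [smul_inv_smul]) :
    x⁻¹ • O ∈ 𝓝 1)
  set S := cnUnion N 1 V
  have hS : S ∈ 𝓝 1 := hN V hV
  obtain ⟨_, hdD, u, ⟨huV, huS⟩, rfl⟩ : (D ∩ x • (V ∩ S⁻¹)).Nonempty :=
    hD.inter_nhds_nonempty (smul_mem_nhds_self.2 (inter_mem hV (inv_mem_nhds_one G hS)))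
  set d := x • u
  have hz : d⁻¹ * x ∈ S := by simpa [d, smul_eq_mul] using huS
  have hdVV : d • (V * V) ⊆ O := by
    rintro _ ⟨_, ⟨a, ha, b, hb, rfl⟩, rfl⟩
    simpa [d, smul_eq_mul, mem_smul_set_iff_inv_smul_mem, mul_assoc]
      using hVO huV ha hb (mem_of_mem_nhds hV)
  have hx : d • cnUnion (image2 (· * ·) N N) (d⁻¹ * x) (V * V) ∈ 𝓝 x := by
    simpa [smul_eq_mul] using smul_mem_nhds_smul d
      (mem_of_superset (smul_mem_nhds_self.2 hS) (smul_cnUnion_one_subset_cnUnion_mul hz))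
  refine mem_of_superset hx ((smul_cnUnion_subset _ _ _ _).trans ?_)
  rw [smul_eq_mul, mul_inv_cancel_left]
  exact cnUnion_mono (image_subset_iff.2 fun m hm => mem_image2_of_mem hdD hm) hdVV
end

section
/- If G is a topological group with a countable cp-network at the identity element and G is separable, then G has a countable cp-network. -/
open Filter Set Topology Pointwise Bornology

/-!
Let `D` be countable and dense. Given `x` and a neighborhood `W` of `1`, the points `d⁻¹ * x`
(`d ∈ D`) accumulate at `1`, so some `n ∈ N` inside `W` contains one of them. Then for every
`m ⊆ W` we get `x • m ⊆ d • (n * m) ⊆ x • (W⁻¹ * (W * W))`. Thus the countable family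
`{d • (n * m) | d ∈ D, n ∈ N, m ∈ N}` refines the cp-network `x • N` at `x` by enlarging its
members, and enlarging members inside prescribed neighborhoods keeps a cp-network a cp-network.
-/

section Network

variable {X Y : Type*} [TopologicalSpace X] [TopologicalSpace Y]

theorem IsCpNetworkAt.image_homeomorph {N : Set (Set X)} {x : X} (hN : IsCpNetworkAt N x)
    (e : X ≃ₜ Y) : IsCpNetworkAt ((e '' ·) '' N) (e x) := by
  constructor
  · intro O hO
    obtain ⟨n, hnN, hxn, hnO⟩ := hN.1 _ (e.continuous.continuousAt.preimage_mem_nhds hO)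
    exact ⟨e '' n, mem_image_of_mem _ hnN, mem_image_of_mem _ hxn, image_subset_iff.2 hnO⟩
  · rintro A ⟨hxA, hxA'⟩ O hO
    have hx : x ∈ closure (e ⁻¹' A) \ e ⁻¹' A := ⟨by rwa [← e.preimage_closure], hxA'⟩
    obtain ⟨n, hnN, hxn, hnO, hinf⟩ :=
      hN.2 _ hx _ (e.continuous.continuousAt.preimage_mem_nhds hO)
    refine ⟨e '' n, mem_image_of_mem _ hnN, mem_image_of_mem _ hxn, image_subset_iff.2 hnO, ?_⟩
    rw [← image_inter_preimage]
    exact hinf.image e.injective.injOn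

theorem IsCpNetworkAt.of_refinement {N N' : Set (Set X)} {x : X} (hN : IsCpNetworkAt N x)
    (h : ∀ O ∈ 𝓝 x, ∃ V ∈ 𝓝 x, ∀ n ∈ N, n ⊆ V → ∃ n' ∈ N', n ⊆ n' ∧ n' ⊆ O) :
    IsCpNetworkAt N' x := by
  constructor
  · intro O hO
    obtain ⟨V, hV, hVO⟩ := h O hO
    obtain ⟨n, hnN, hxn, hnV⟩ := hN.1 V hV
    obtain ⟨n', hn'N', hnn', hn'O⟩ := hVO n hnN hnV
    exact ⟨n', hn'N', hnn' hxn, hn'O⟩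
  · intro A hA O hO
    obtain ⟨V, hV, hVO⟩ := h O hO
    obtain ⟨n, hnN, hxn, hnV, hinf⟩ := hN.2 A hA V hV
    obtain ⟨n', hn'N', hnn', hn'O⟩ := hVO n hnN hnV
    exact ⟨n', hn'N', hnn' hxn, hn'O, hinf.mono (inter_subset_inter_left A hnn')⟩

theorem IsCpNetworkAt.exists_subset_inter_nonempty {N : Set (Set X)} {x : X}
    (hN : IsCpNetworkAt N x) {B O : Set X} (hB : x ∈ closure B) (hO : O ∈ 𝓝 x) :
    ∃ n ∈ N, n ⊆ O ∧ (n ∩ B).Nonempty := by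
  by_cases hxB : x ∈ B
  · obtain ⟨n, hnN, hxn, hnO⟩ := hN.1 O hO
    exact ⟨n, hnN, hnO, x, hxn, hxB⟩
  · obtain ⟨n, hnN, -, hnO, hinf⟩ := hN.2 B ⟨hB, hxB⟩ O hO
    exact ⟨n, hnN, hnO, hinf.nonempty⟩

end Network

section Group

variable {G : Type*} [Group G] [TopologicalSpace G] [IsTopologicalGroup G]

theorem exists_nhds_one_inv_mul_mul_mem {U : Set G} (hU : U ∈ 𝓝 (1 : G)) :
    ∃ W ∈ 𝓝 (1 : G), ∀ a ∈ W, ∀ b ∈ W, ∀ c ∈ W, a⁻¹ * (b * c) ∈ U := by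
  obtain ⟨V, hV, hVU⟩ := exists_nhds_one_split hU
  obtain ⟨V', hV', hV'V⟩ := exists_nhds_one_split hV
  exact ⟨V' ∩ V⁻¹, inter_mem hV' (inv_mem_nhds_one G hV),
    fun a ha b hb c hc => hVU _ ha.2 _ (hV'V _ hb.1 _ hc.1)⟩

theorem one_mem_closure_image_inv_mul {D : Set G} (hD : Dense D) (x : G) :
    (1 : G) ∈ closure ((fun d => d⁻¹ * x) '' D) := by
  have hsurj : Function.Surjective fun d : G => d⁻¹ * x :=
    fun g => ⟨x * g⁻¹, by group⟩
  exact hsurj.denseRange.dense_image (by fun_prop) hD 1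

theorem exists_nhds_one_smul_subset_smul_mul_subset {N : Set (Set G)}
    (hN : IsCpNetworkAt N (1 : G)) {D : Set G} (hD : Dense D) {x : G} {O : Set G} (hO : O ∈ 𝓝 x) :
    ∃ V ∈ 𝓝 (1 : G), ∀ m ⊆ V, ∃ d ∈ D, ∃ n ∈ N, x • m ⊆ d • (n * m) ∧ d • (n * m) ⊆ O := by
  have hO₁ : x⁻¹ • O ∈ 𝓝 (1 : G) := by
    simpa using (smul_mem_nhds_smul_iff x⁻¹).2 hO
  obtain ⟨W, hW, hWO⟩ := exists_nhds_one_inv_mul_mul_mem hO₁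
  obtain ⟨n, hnN, hnW, _, hbn, d, hdD, rfl⟩ :=
    hN.exists_subset_inter_nonempty (one_mem_closure_image_inv_mul hD x) hW
  refine ⟨W, hW, fun m hmW => ⟨d, hdD, n, hnN, ?_, ?_⟩⟩
  · calc x • m = d • ((d⁻¹ * x) • m) := by rw [smul_smul, mul_inv_cancel_left]
      _ ⊆ d • (n * m) := smul_set_mono (smul_set_subset_mul hbn)
  · rintro _ ⟨_, ⟨p, hp, q, hq, rfl⟩, rfl⟩
    -- `d * (p * q) = x * ((d⁻¹ * x)⁻¹ * (p * q))` with all three factors in `W`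
    have h := hWO _ (hnW hbn) _ (hnW hp) _ (hmW hq)
    rw [mem_smul_set_iff_inv_smul_mem, inv_inv, smul_eq_mul] at h
    convert h using 1
    simp only [smul_eq_mul, mul_inv_rev, inv_inv, mul_assoc, mul_inv_cancel_left]

end Group

theorem statement1 {G : Type*} [Group G] [TopologicalSpace G] [IsTopologicalGroup G]
    [TopologicalSpace.SeparableSpace G]
    (N : Set (Set G)) (hNc : N.Countable) (hN : IsCpNetworkAt N (1 : G)) :
    ∃ N' : Set (Set G), N'.Countable ∧ ∀ x : G, IsCpNetworkAt N' x := by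
  obtain ⟨D, hDc, hD⟩ := TopologicalSpace.exists_countable_dense G
  refine ⟨(fun p : G × Set G × Set G => p.1 • (p.2.1 * p.2.2)) '' D ×ˢ N ×ˢ N,
    (hDc.prod (hNc.prod hNc)).image _, fun x => ?_⟩
  have hNx : IsCpNetworkAt ((fun m => x • m) '' N) x := by
    convert hN.image_homeomorph (Homeomorph.mulLeft x) using 1
    · rfl
    · exact (mul_one x).symm
  refine hNx.of_refinement fun O hO => ?_
  obtain ⟨V, hV, hVO⟩ := exists_nhds_one_smul_subset_smul_mul_subset hN hD hO
  refine ⟨x • V, by simpa using (smul_mem_nhds_smul_iff x).2 hV, ?_⟩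
  rintro _ ⟨m, hmN, rfl⟩ hmV
  obtain ⟨d, hdD, n, hnN, hsub, hnmO⟩ := hVO m (smul_set_subset_smul_set_iff.1 hmV)
  exact ⟨_, ⟨(d, n, m), ⟨hdD, hnN, hmN⟩, rfl⟩, hsub, hnmO⟩
end

section
/- A topological space X has a countable cn-network at a point x if and only if X has a small base {U_α : α ∈ M} at x (an M-decreasing base of neighborhoods of x indexed by some subset M of ℕ^ℕ with the natural partial order) satisfying the condition (D): U_α = ⋃_{k∈ℕ} D_k(α) for every α ∈ M, where D_k(α) = ⋂{U_β : β ∈ M, β_i = α_i for i = 1,…,k}. Moreover, in that case the countable family {D_k(α) : α ∈ M, k ∈ ℕ} is a countable cn-network at x. -/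
open Filter Set Topology Pointwise Bornology

/-!
Given a countable cn-network `{e i}` at `x`, a function `α : ℕ → ℕ` selects the members `e i`
with `α i = 0` that contain `x`; their union `U α` shrinks as `α` grows. The indices `α` for which
`U α` is a neighborhood of `x` form the required small base: the cn-property applied to `O` makes the
`α` that vanishes exactly on the `e i ⊆ O` containing `x` such an index. Condition (D) holds because a
point of `e i ⊆ U α` lies in every `U β` with `β i = α i = 0`, i.e. in `D_{i+1}(α)`.

Conversely, if a small base satisfies (D), then `D_k(α)` depends only on the first `k` values of `α`,
so there are countably many of them, and each `U α` is the increasing union of the sets `D_k(α)`.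
-/

section Dk

variable {X : Type*} (M : Set (ℕ → ℕ)) (U : (ℕ → ℕ) → Set X)

lemma Dk_congr (k : ℕ) {α α' : ℕ → ℕ} (h : ∀ i < k, α i = α' i) :
    Dk M U k α = Dk M U k α' := by
  have hset : {β ∈ M | ∀ i < k, β i = α i} = {β ∈ M | ∀ i < k, β i = α' i} := by
    ext β
    exact and_congr_right fun _ => forall₂_congr fun i hi => by rw [h i hi]
  rw [Dk, hset, Dk]

lemma Dk_mono {k k' : ℕ} (hk : k ≤ k') (α : ℕ → ℕ) : Dk M U k α ⊆ Dk M U k' α :=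
  biInter_mono (fun _ hβ => ⟨hβ.1, fun i hi => hβ.2 i (hi.trans_le hk)⟩) fun _ _ => le_rfl

lemma Dk_subset {α : ℕ → ℕ} (hα : α ∈ M) (k : ℕ) : Dk M U k α ⊆ U α :=
  biInter_subset_of_mem ⟨hα, fun _ _ => rfl⟩

lemma countable_setOf_Dk : {D | ∃ α ∈ M, ∃ k : ℕ, D = Dk M U k α}.Countable := by
  refine (countable_range fun l : List ℕ => Dk M U l.length (l.getD · 0)).mono ?_
  rintro D ⟨α, -, k, rfl⟩
  refine ⟨List.ofFn fun i : Fin k => α i, ?_⟩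
  dsimp only
  rw [List.length_ofFn]
  refine Dk_congr M U k fun i hi => ?_
  rw [List.getD_eq_getElem _ _ (by simpa using hi), List.getElem_ofFn]

lemma IsSmallBaseAt.isCnNetworkAt_Dk [TopologicalSpace X] {x : X} (hsb : IsSmallBaseAt M U x)
    (hD : CondD M U) :
    IsCnNetworkAt {D | ∃ α ∈ M, ∃ k : ℕ, D = Dk M U k α} x := by
  intro O hO
  obtain ⟨α, hα, hαO⟩ := hsb.2.2 O hO
  have hUα := hsb.2.1 α hα
  have mem_Dk : ∀ y ∈ U α, ∃ k, y ∈ Dk M U k α := fun y hy => mem_iUnion.1 (hD α hα ▸ hy)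
  obtain ⟨k₀, hk₀⟩ := mem_Dk x (mem_of_mem_nhds hUα)
  refine mem_of_superset hUα fun y hy => ?_
  obtain ⟨k₁, hk₁⟩ := mem_Dk y hy
  exact ⟨Dk M U (max k₀ k₁) α,
    ⟨⟨α, hα, _, rfl⟩, Dk_mono M U (le_max_left _ _) α hk₀, (Dk_subset M U hα _).trans hαO⟩,
    Dk_mono M U (le_max_right _ _) α hk₁⟩

end Dk

section NetworkUnion

variable {X : Type*} (e : ℕ → Set X) (x : X)

def networkUnion (α : ℕ → ℕ) : Set X :=
  ⋃ (i) (_ : α i = 0) (_ : x ∈ e i), e i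

lemma mem_networkUnion {α : ℕ → ℕ} {y : X} :
    y ∈ networkUnion e x α ↔ ∃ i, α i = 0 ∧ x ∈ e i ∧ y ∈ e i := by
  simp only [networkUnion, mem_iUnion, exists_prop]

lemma networkUnion_antitone : Antitone (networkUnion e x) := by
  intro α β hle y hy
  obtain ⟨i, hβi, hxi, hyi⟩ := (mem_networkUnion e x).1 hy
  exact (mem_networkUnion e x).2 ⟨i, Nat.le_zero.1 (hβi ▸ hle i), hxi, hyi⟩

lemma condD_networkUnion (M : Set (ℕ → ℕ)) : CondD M (networkUnion e x) := by
  intro α hα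
  refine Subset.antisymm (fun y hy => ?_) (iUnion_subset (Dk_subset M _ hα))
  obtain ⟨i, hαi, hxi, hyi⟩ := (mem_networkUnion e x).1 hy
  refine mem_iUnion.2 ⟨i + 1, mem_iInter₂.2 fun β hβ => ?_⟩
  exact (mem_networkUnion e x).2 ⟨i, (hβ.2 i i.lt_succ_self).trans hαi, hxi, hyi⟩

lemma IsCnNetworkAt.isSmallBaseAt_networkUnion [TopologicalSpace X]
    (hN : IsCnNetworkAt (range e) x) :
    IsSmallBaseAt {α | networkUnion e x α ∈ 𝓝 x} (networkUnion e x) x := by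
  classical
  refine ⟨fun α _ β _ h => networkUnion_antitone e x h, fun _ hα => hα, fun O hO => ?_⟩
  let α : ℕ → ℕ := fun i => if x ∈ e i ∧ e i ⊆ O then 0 else 1
  have hα : ∀ i, α i = 0 ↔ x ∈ e i ∧ e i ⊆ O := fun i => by
    by_cases h : x ∈ e i ∧ e i ⊆ O <;> simp [α, h]
  have hsub : ⋃₀ {n | n ∈ range e ∧ x ∈ n ∧ n ⊆ O} ⊆ networkUnion e x α := by
    rintro y ⟨_, ⟨⟨i, rfl⟩, hxi, hiO⟩, hyi⟩
    exact (mem_networkUnion e x).2 ⟨i, (hα i).2 ⟨hxi, hiO⟩, hxi, hyi⟩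
  refine ⟨α, mem_of_superset (hN O hO) hsub, fun y hy => ?_⟩
  obtain ⟨i, hαi, -, hyi⟩ := (mem_networkUnion e x).1 hy
  exact ((hα i).1 hαi).2 hyi

end NetworkUnion

lemma IsCnNetworkAt.nonempty {X : Type*} [TopologicalSpace X] {N : Set (Set X)} {x : X}
    (hN : IsCnNetworkAt N x) : N.Nonempty := by
  obtain ⟨n, ⟨hn, -⟩, -⟩ := mem_of_mem_nhds (hN univ univ_mem)
  exact ⟨n, hn⟩

theorem statement2 {X : Type*} [TopologicalSpace X] (x : X) :
    ((∃ N : Set (Set X), N.Countable ∧ IsCnNetworkAt N x) ↔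
      ∃ (M : Set (ℕ → ℕ)) (U : (ℕ → ℕ) → Set X), IsSmallBaseAt M U x ∧ CondD M U) ∧
    (∀ (M : Set (ℕ → ℕ)) (U : (ℕ → ℕ) → Set X), IsSmallBaseAt M U x → CondD M U →
      ({D | ∃ α ∈ M, ∃ k : ℕ, D = Dk M U k α} : Set (Set X)).Countable ∧
      IsCnNetworkAt {D | ∃ α ∈ M, ∃ k : ℕ, D = Dk M U k α} x) := by
  refine ⟨⟨fun ⟨N, hNc, hN⟩ => ?_, fun ⟨M, U, hsb, hD⟩ =>
    ⟨_, countable_setOf_Dk M U, hsb.isCnNetworkAt_Dk M U hD⟩⟩,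
    fun M U hsb hD => ⟨countable_setOf_Dk M U, hsb.isCnNetworkAt_Dk M U hD⟩⟩
  obtain ⟨e, rfl⟩ := hNc.exists_eq_range hN.nonempty
  exact ⟨_, _, hN.isSmallBaseAt_networkUnion, condD_networkUnion e x _⟩
end

section
/- A Baire topological group G is metrizable if and only if G has a countable cn-network at the identity. -/
open Filter Set Topology Pointwise Bornology

/-!
A metrizable space is first countable, and a countable neighborhood base is a cn-network.
Conversely, let `N` be a countable cn-network at `1` and `O` a neighborhood of `1`; choose a
closed symmetric neighborhood `V` with `V * V ⊆ O`. The members of `N` between `1` and `V`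
cover a neighborhood of `1`, so by the Baire property one of them, `n`, is somewhere dense.
Then `closure n * (closure n)⁻¹` is a neighborhood of `1` inside `O`. These countably many sets
form a base at `1`, and a first countable Hausdorff group is metrizable (Birkhoff–Kakutani).
-/

section Network

variable {X : Type*} [TopologicalSpace X]

theorem IsNetworkAt.isCnNetworkAt {N : Set (Set X)} {x : X} (hN : IsNetworkAt N x)
    (hN_nhds : ∀ n ∈ N, n ∈ 𝓝 x) : IsCnNetworkAt N x := fun O hO => by
  obtain ⟨n, hnN, hxn, hnO⟩ := hN O hO
  exact mem_of_superset (hN_nhds n hnN) fun y hy => ⟨n, ⟨hnN, hxn, hnO⟩, hy⟩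

theorem exists_countable_isCnNetworkAt [FirstCountableTopology X] (x : X) :
    ∃ N : Set (Set X), N.Countable ∧ IsCnNetworkAt N x := by
  obtain ⟨b, hb⟩ := (𝓝 x).exists_antitone_basis
  refine ⟨range b, countable_range b, IsNetworkAt.isCnNetworkAt ?_ (forall_mem_range.2 hb.mem)⟩
  intro O hO
  obtain ⟨i, hi⟩ := hb.mem_iff.1 hO
  exact ⟨b i, mem_range_self i, mem_of_mem_nhds (hb.mem i), hi⟩

theorem exists_mem_nonempty_interior_closure_of_sUnion [BaireSpace X] {S : Set (Set X)}
    (hS : S.Countable) (h : (interior (⋃₀ S)).Nonempty) :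
    ∃ s ∈ S, (interior (closure s)).Nonempty := by
  by_contra! hnd
  exact not_isMeagre_of_isOpen isOpen_interior h <|
    (isMeagre_iff_countable_union_isNowhereDense.2 ⟨S, hnd, hS, subset_rfl⟩).mono interior_subset

end Network

section Group

variable {G : Type*} [Group G] [TopologicalSpace G] [IsTopologicalGroup G]

theorem mul_inv_mem_nhds_one_of_nonempty_interior {A : Set G} (hA : (interior A).Nonempty) :
    A * A⁻¹ ∈ 𝓝 (1 : G) := by
  obtain ⟨x, hx⟩ := hA
  have hopen : IsOpen (interior A * (interior A)⁻¹) := isOpen_interior.mul_right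
  have hone : (1 : G) ∈ interior A * (interior A)⁻¹ := by
    simpa using mul_mem_mul hx (inv_mem_inv.2 hx)
  exact mem_of_superset (hopen.mem_nhds hone)
    (mul_subset_mul interior_subset (inv_subset_inv.2 interior_subset))

theorem IsCnNetworkAt.nhds_one_hasBasis [BaireSpace G] {N : Set (Set G)} (hNc : N.Countable)
    (hN : IsCnNetworkAt N (1 : G)) :
    (𝓝 (1 : G)).HasBasis (fun n => n ∈ N ∧ (interior (closure n)).Nonempty)
      (fun n => closure n * (closure n)⁻¹) := by
  refine ⟨fun O => ⟨fun hO => ?_, fun ⟨n, ⟨_, hn⟩, hnO⟩ => ?_⟩⟩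
  · obtain ⟨V, hV, hVclosed, hVinv, hVO⟩ := exists_closed_nhds_one_inv_eq_mul_subset hO
    obtain ⟨n, ⟨hnN, -, hnV⟩, hn⟩ := exists_mem_nonempty_interior_closure_of_sUnion
      (hNc.mono fun _ h => h.1) ⟨1, mem_interior_iff_mem_nhds.2 (hN V hV)⟩
    have hclV : closure n ⊆ V := closure_minimal hnV hVclosed
    refine ⟨n, ⟨hnN, hn⟩, ?_⟩
    calc closure n * (closure n)⁻¹ ⊆ V * V⁻¹ := mul_subset_mul hclV (inv_subset_inv.2 hclV)
      _ = V * V := by rw [hVinv]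
      _ ⊆ O := hVO
  · exact mem_of_superset (mul_inv_mem_nhds_one_of_nonempty_interior hn) hnO

theorem IsTopologicalGroup.metrizableSpace_of_isCountablyGenerated [T0Space G]
    [(𝓝 (1 : G)).IsCountablyGenerated] : TopologicalSpace.MetrizableSpace G := by
  let : UniformSpace G := IsTopologicalGroup.rightUniformSpace G
  have : (uniformity G).IsCountablyGenerated := by
    rw [uniformity_eq_comap_nhds_one']
    exact Filter.comap.isCountablyGenerated _ _
  exact UniformSpace.metrizableSpace

end Group

theorem statement3 {G : Type*} [Group G] [TopologicalSpace G] [IsTopologicalGroup G]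
    [T2Space G] [BaireSpace G] :
    TopologicalSpace.MetrizableSpace G ↔
      ∃ N : Set (Set G), N.Countable ∧ IsCnNetworkAt N (1 : G) := by
  refine ⟨fun _ => exists_countable_isCnNetworkAt 1, ?_⟩
  rintro ⟨N, hNc, hN⟩
  have : (𝓝 (1 : G)).IsCountablyGenerated :=
    HasCountableBasis.isCountablyGenerated
      ⟨hN.nhds_one_hasBasis hNc, hNc.mono fun _ h => h.1⟩
  exact IsTopologicalGroup.metrizableSpace_of_isCountablyGenerated
end

section
/- A Baire topological group G with the strong Pytkeev property is metrizable. -/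
open Filter Set Topology Pointwise Bornology

/-!
Feed the Pytkeev family `𝒟` at `1` the set `A` of points lying in no nowhere dense member of `𝒟`
(minus `1`). By Baire category `A` is dense, so inside every neighbourhood of `1` the family has a
member `d` meeting `A`, i.e. `d` is somewhere dense. For `S = interior (closure d)` the open sets
`S⁻¹ * S` then form a countable base at `1`, and a first countable Hausdorff group is metrizable.
-/

section Baire

variable {X : Type*} [TopologicalSpace X]

theorem dense_compl_biUnion_isNowhereDense [BaireSpace X] {𝒟 : Set (Set X)}
    (h𝒟 : 𝒟.Countable) : Dense (⋃ d ∈ {d ∈ 𝒟 | IsNowhereDense d}, d)ᶜ :=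
  dense_of_mem_residual <| isMeagre_biUnion (h𝒟.mono (sep_subset _ _)) fun _ hd => hd.2.isMeagre

theorem exists_subset_nonempty_interior_closure_of_pytkeev [T1Space X] [BaireSpace X] {x : X}
    [(𝓝[≠] x).NeBot] {𝒟 : Set (Set X)} (h𝒟c : 𝒟.Countable)
    (h𝒟 : ∀ U ∈ 𝓝 x, ∀ A : Set X, x ∈ closure A \ A → ∃ d ∈ 𝒟, d ⊆ U ∧ (d ∩ A).Infinite)
    {U : Set X} (hU : U ∈ 𝓝 x) : ∃ d ∈ 𝒟, d ⊆ U ∧ (interior (closure d)).Nonempty := by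
  set A := (⋃ d ∈ {d ∈ 𝒟 | IsNowhereDense d}, d)ᶜ \ {x}
  have hxA : x ∈ closure A \ A :=
    ⟨(dense_compl_biUnion_isNowhereDense h𝒟c).sdiff_singleton x x, fun hx => hx.2 rfl⟩
  obtain ⟨d, hd𝒟, hdU, hdA⟩ := h𝒟 U hU A hxA
  refine ⟨d, hd𝒟, hdU, nonempty_iff_ne_empty.2 fun hnd => ?_⟩
  obtain ⟨y, hyd, hyA⟩ := hdA.nonempty
  exact hyA.1 (mem_biUnion ⟨hd𝒟, hnd⟩ hyd)

end Baire

section Group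

variable {G : Type*} [Group G] [TopologicalSpace G] [IsTopologicalGroup G]

theorem inv_mul_self_mem_nhds_one {S : Set G} (hS : IsOpen S) (hne : S.Nonempty) :
    S⁻¹ * S ∈ 𝓝 1 := by
  obtain ⟨x, hx⟩ := hne
  refine hS.mul_left.mem_nhds ?_
  simpa using mul_mem_mul (inv_mem_inv.2 hx) hx

theorem isCountablyGenerated_nhds_one_of_somewhere_dense_network {𝒟 : Set (Set G)}
    (h𝒟c : 𝒟.Countable)
    (h𝒟 : ∀ U ∈ 𝓝 (1 : G), ∃ d ∈ 𝒟, d ⊆ U ∧ (interior (closure d)).Nonempty) :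
    (𝓝 (1 : G)).IsCountablyGenerated := by
  have : Countable 𝒟 := h𝒟c.to_subtype
  have hbasis : (𝓝 (1 : G)).HasBasis (fun d : 𝒟 => (interior (closure (d : Set G))).Nonempty)
      (fun d => (interior (closure (d : Set G)))⁻¹ * interior (closure (d : Set G))) := by
    refine ⟨fun t => ⟨fun ht => ?_, fun ⟨d, hne, hdt⟩ => ?_⟩⟩
    · obtain ⟨V, hV, hVc, hVinv, hVt⟩ := exists_closed_nhds_one_inv_eq_mul_subset ht
      obtain ⟨d, hd𝒟, hdV, hne⟩ := h𝒟 V hV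
      have hsub : interior (closure d) ⊆ V :=
        interior_subset.trans (closure_minimal hdV hVc)
      refine ⟨⟨d, hd𝒟⟩, hne, ?_⟩
      calc (interior (closure d))⁻¹ * interior (closure d) ⊆ V⁻¹ * V :=
            mul_subset_mul (inv_subset_inv.2 hsub) hsub
        _ ⊆ t := by rwa [hVinv]
    · exact mem_of_superset (inv_mul_self_mem_nhds_one isOpen_interior hne) hdt
  exact hbasis.isCountablyGenerated

theorem IsTopologicalGroup.metrizableSpace_of_isCountablyGenerated_nhds_one [T2Space G]
    [(𝓝 (1 : G)).IsCountablyGenerated] : TopologicalSpace.MetrizableSpace G := by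
  let := IsTopologicalGroup.rightUniformSpace G
  have : (uniformity G).IsCountablyGenerated := comap.isCountablyGenerated _ _
  exact UniformSpace.metrizableSpace

end Group

theorem statement4 {G : Type*} [Group G] [TopologicalSpace G] [IsTopologicalGroup G]
    [T2Space G] [BaireSpace G] (h : HasStrongPytkeev G) :
    TopologicalSpace.MetrizableSpace G := by
  obtain ⟨𝒟, h𝒟c, h𝒟⟩ := h 1
  have : (𝓝 (1 : G)).IsCountablyGenerated := by
    by_cases hiso : (𝓝[≠] (1 : G)).NeBot
    · exact isCountablyGenerated_nhds_one_of_somewhere_dense_network h𝒟c fun U hU =>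
        exists_subset_nonempty_interior_closure_of_pytkeev h𝒟c h𝒟 hU
    · rw [not_neBot, ← isOpen_singleton_iff_punctured_nhds,
        isOpen_singleton_iff_nhds_eq_pure, ← principal_singleton] at hiso
      exact hiso ▸ isCountablyGenerated_principal _
  exact IsTopologicalGroup.metrizableSpace_of_isCountablyGenerated_nhds_one
end

section
/- In the Banach space ℓ¹, let M₀ := ℕ^ℕ ∩ ℓ^∞ (bounded sequences of positive integers) and for α ∈ M₀ define U_α := { x ∈ ℓ¹ : Σ_i α_i |x_i| < 1 }. Then {U_α : α ∈ M₀} is an M₀-decreasing neighborhood base at 0, but condition (D) fails: for each α ∈ M₀ and k ∈ ℕ, D_k(α) = { x ∈ ℓ¹ : Σ_{i≤k} α_i|x_i| < 1 and x_i = 0 for i > k }, and ⋃_k D_k(α) ≠ U_α. -/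
open Filter Set Topology Pointwise Bornology

local instance : Fact ((1 : ENNReal) ≤ 1) := ⟨le_rfl⟩

/-- The index set `M₀ = ℕ^ℕ ∩ ℓ^∞`: bounded sequences of positive integers. -/
def M0 : Set (ℕ → ℕ) := {α | (∀ i, 1 ≤ α i) ∧ ∃ C, ∀ i, α i ≤ C}

/-- The sets `U_α = {x ∈ ℓ¹ : ∑ᵢ αᵢ |xᵢ| < 1}`. -/
def Ul1 (α : ℕ → ℕ) : Set (lp (fun _ : ℕ => ℝ) 1) :=
  {x | ∑' i, (α i : ℝ) * |x i| < 1}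


/-!
The weights `α ∈ M₀` are bounded, so `U_α` contains the ball of radius `1 / sup α`, and the
constant weights `n` give the balls of radius `1 / n`; this makes `{U_α}` a decreasing base at `0`.
An element `β ∈ M₀` agreeing with `α` below `k` may put an arbitrarily large weight on any
coordinate `j ≥ k`, so every point of `D_k(α)` vanishes from `k` on. Since `U_α` is a neighbourhood
of `0`, it contains a point with no zero coordinate (a small multiple of `(2⁻ⁱ)ᵢ`), which then
lies in no `D_k(α)`.
-/

open scoped lp

section Ell1

variable {ι : Type*} {α β : ι → ℕ} {C : ℕ}

lemma lp.summable_abs (x : ℓ¹(ι, ℝ)) : Summable fun i => |x i| := by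
  simpa using (lp.memℓp x).summable (by norm_num)

lemma lp.norm_eq_tsum_abs (x : ℓ¹(ι, ℝ)) : ‖x‖ = ∑' i, |x i| := by
  simpa using lp.norm_eq_tsum_rpow (by norm_num) x

lemma lp.summable_weighted_abs (hC : ∀ i, α i ≤ C) (x : ℓ¹(ι, ℝ)) :
    Summable fun i => (α i : ℝ) * |x i| :=
  .of_nonneg_of_le (fun _ => by positivity)
    (fun i => by gcongr; exact_mod_cast hC i) ((lp.summable_abs x).mul_left (C : ℝ))

lemma lp.tsum_weighted_abs_le (hβ : ∀ i, β i ≤ C) (hαβ : α ≤ β) (x : ℓ¹(ι, ℝ)) :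
    ∑' i, (α i : ℝ) * |x i| ≤ ∑' i, (β i : ℝ) * |x i| :=
  (lp.summable_weighted_abs (fun i => (hαβ i).trans (hβ i)) x).tsum_le_tsum
    (fun i => by gcongr; exact_mod_cast hαβ i) (lp.summable_weighted_abs hβ x)

end Ell1

section Ul1

variable {α β : ℕ → ℕ} {C : ℕ}

lemma Ul1_anti (hβ : ∀ i, β i ≤ C) (hαβ : α ≤ β) : Ul1 β ⊆ Ul1 α := fun x hx =>
  (lp.tsum_weighted_abs_le hβ hαβ x).trans_lt hx

lemma Ul1_const (c : ℕ) : Ul1 (fun _ => c) = {x | (c : ℝ) * ‖x‖ < 1} := by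
  ext x
  simp [Ul1, tsum_mul_left, lp.norm_eq_tsum_abs]

lemma Ul1_mem_nhds_zero (hC : ∀ i, α i ≤ C) : Ul1 α ∈ 𝓝 0 := by
  have hopen : IsOpen (Ul1 fun _ => C) := by
    rw [Ul1_const]
    exact isOpen_lt (by fun_prop) continuous_const
  exact mem_of_superset (hopen.mem_nhds (by simp [Ul1_const])) (Ul1_anti (fun _ => le_rfl) hC)

lemma exists_Ul1_const_subset_of_mem_nhds_zero {O : Set ℓ¹(ℕ, ℝ)} (hO : O ∈ 𝓝 0) :
    ∃ n : ℕ, Ul1 (fun _ => n + 1) ⊆ O := by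
  obtain ⟨ε, hε, hball⟩ := Metric.mem_nhds_iff.mp hO
  obtain ⟨n, hn⟩ := exists_nat_one_div_lt hε
  refine ⟨n, fun x hx => hball ?_⟩
  rw [Ul1_const, Set.mem_ofPred_eq, ← lt_div_iff₀' (by positivity)] at hx
  rw [Metric.mem_ball, dist_zero_right]
  push_cast at hx
  linarith

lemma update_mem_M0 (hα : α ∈ M0) (j : ℕ) {n : ℕ} (hn : 1 ≤ n) :
    Function.update α j n ∈ M0 := by
  obtain ⟨hα1, C, hC⟩ := hα
  refine ⟨fun i => ?_, max C n, fun i => ?_⟩ <;> rcases eq_or_ne i j with rfl | hij <;> simp [*]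

lemma apply_eq_zero_of_forall_update_mem_Ul1 (hC : ∀ i, α i ≤ C) {x : ℓ¹(ℕ, ℝ)} (j : ℕ)
    (hx : ∀ n, 1 ≤ n → x ∈ Ul1 (Function.update α j n)) : x j = 0 := by
  by_contra hxj
  have hxj_pos : 0 < |x j| := abs_pos.mpr hxj
  obtain ⟨n, hn⟩ := exists_nat_ge (1 / |x j|)
  set β := Function.update α j (n + 1)
  have hβ : ∀ i, β i ≤ max C (n + 1) := fun i => by
    rcases eq_or_ne i j with rfl | hij <;> simp [β, *]
  have hterm : 1 < (β j : ℝ) * |x j| := by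
    rw [div_le_iff₀ hxj_pos] at hn
    simp only [β, Function.update_self]
    push_cast
    nlinarith
  have hle : (β j : ℝ) * |x j| ≤ ∑' i, (β i : ℝ) * |x i| :=
    (lp.summable_weighted_abs hβ x).le_tsum j fun i _ => by positivity
  have hlt : ∑' i, (β i : ℝ) * |x i| < 1 := hx (n + 1) (by omega)
  linarith

lemma Dk_M0_Ul1 (hα : α ∈ M0) (k : ℕ) :
    Dk M0 Ul1 k α = {x : ℓ¹(ℕ, ℝ) |
      (∑ i ∈ Finset.range k, (α i : ℝ) * |x i|) < 1 ∧ ∀ i, k ≤ i → x i = 0} := by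
  obtain ⟨C, hC⟩ := hα.2
  ext x
  simp only [Dk, Set.mem_iInter, Set.mem_ofPred_eq]
  constructor
  · intro hx
    refine ⟨?_, fun j hj => apply_eq_zero_of_forall_update_mem_Ul1 hC j fun n hn =>
      hx _ ⟨update_mem_M0 hα j hn, fun i hi => Function.update_of_ne (by omega) _ _⟩⟩
    exact ((lp.summable_weighted_abs hC x).sum_le_tsum _ fun i _ => by positivity).trans_lt
      (hx α ⟨hα, fun _ _ => rfl⟩)
  · rintro ⟨hsum, hzero⟩ β ⟨-, hβα⟩
    show ∑' i, (β i : ℝ) * |x i| < 1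
    rw [tsum_eq_sum (s := Finset.range k) fun i hi => by simp [hzero i (by simpa using hi)]]
    rwa [Finset.sum_congr rfl fun i hi => by rw [hβα i (Finset.mem_range.mp hi)]]

end Ul1

lemma exists_forall_ne_zero_mem_of_mem_nhds_zero {U : Set ℓ¹(ℕ, ℝ)} (hU : U ∈ 𝓝 0) :
    ∃ x ∈ U, ∀ i, x i ≠ 0 := by
  let y : ℓ¹(ℕ, ℝ) :=
    ⟨fun i => (1 / 2 : ℝ) ^ i, memℓp_gen (by simpa using summable_geometric_two)⟩
  have hlim : Tendsto (fun t : ℝ => t • y) (𝓝[≠] 0) (𝓝 0) := by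
    have h0 : Tendsto (fun t : ℝ => t • y) (𝓝 0) (𝓝 ((0 : ℝ) • y)) :=
      (continuous_id.smul continuous_const).tendsto 0
    exact (zero_smul ℝ y ▸ h0).mono_left nhdsWithin_le_nhds
  obtain ⟨t, htU, ht⟩ := ((hlim.eventually hU).and self_mem_nhdsWithin).exists
  exact ⟨t • y, htU, fun i => by simpa [y] using ht⟩

theorem statement7 :
    IsSmallBaseAt M0 Ul1 (0 : lp (fun _ : ℕ => ℝ) 1) ∧
    (∀ α ∈ M0, ∀ k : ℕ,
      Dk M0 Ul1 k α = {x : lp (fun _ : ℕ => ℝ) 1 |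
        (∑ i ∈ Finset.range k, (α i : ℝ) * |x i|) < 1 ∧ ∀ i, k ≤ i → x i = 0}) ∧
    (∀ α ∈ M0, (⋃ k : ℕ, Dk M0 Ul1 k α) ≠ Ul1 α) := by
  refine ⟨⟨fun α _ β ⟨_, _, hβ⟩ hαβ => Ul1_anti hβ hαβ,
    fun α ⟨_, _, hα⟩ => Ul1_mem_nhds_zero hα, fun O hO => ?_⟩,
    fun α hα => Dk_M0_Ul1 hα, fun α hα hD => ?_⟩
  · obtain ⟨n, hn⟩ := exists_Ul1_const_subset_of_mem_nhds_zero hO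
    exact ⟨_, ⟨fun _ => by omega, n + 1, fun _ => le_rfl⟩, hn⟩
  · obtain ⟨C, hC⟩ := hα.2
    obtain ⟨x, hxU, hx⟩ := exists_forall_ne_zero_mem_of_mem_nhds_zero (Ul1_mem_nhds_zero hC)
    obtain ⟨k, hk⟩ := Set.mem_iUnion.mp (hD ▸ hxU)
    exact hx k (((Dk_M0_Ul1 hα k).subset hk).2 k le_rfl)
end

section
/- Any countable cp-network at a point x of a topological space X is a ck-network at x. -/
open Filter Set Topology Pointwise Bornology

/-!
Enumerate the members of `N` that contain `x` and lie in a given neighborhood `O` as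
`f 0, f 1, …`, and call a sequence *escaping* if it avoids `x` and eventually leaves each `f k`.
The cp-property forbids an escaping sequence to cluster at `x`, and a diagonal argument upgrades
this to: `x` is not even in the closure of the set `D` of cluster points of escaping sequences.
On the neighborhood `(closure D)ᶜ` of `x` every compact set `K` lies in `f 0 ∪ ⋯ ∪ f (m - 1)` for
some `m`: otherwise picking `y m ∈ K` outside `f 0 ∪ ⋯ ∪ f m` gives an escaping sequence, whose
cluster point in `K` would belong to `D`.
-/

section

variable {X : Type*} [TopologicalSpace X] {f : ℕ → Set X} {x : X}

def IsCpSequenceAt (f : ℕ → Set X) (x : X) : Prop :=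
  ∀ A : Set X, x ∈ closure A \ A → ∀ G ∈ 𝓝 x, ∃ k, f k ⊆ G ∧ (f k ∩ A).Infinite

def EventuallyLeaves (f : ℕ → Set X) (u : ℕ → X) : Prop :=
  ∀ k, ∀ᶠ m in atTop, u m ∉ f k

def escapingClusterPts (f : ℕ → Set X) (x : X) : Set X :=
  {p | ∃ u : ℕ → X, EventuallyLeaves f u ∧ (∀ m, u m ≠ x) ∧ MapClusterPt p atTop u}

theorem exists_isCpSequenceAt_of_isCpNetworkAt {N : Set (Set X)} (hc : N.Countable)
    (h : IsCpNetworkAt N x) {O : Set X} (hO : O ∈ 𝓝 x) :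
    ∃ f : ℕ → Set X, (∀ k, f k ∈ N ∧ x ∈ f k ∧ f k ⊆ O) ∧ IsCpSequenceAt f x := by
  obtain ⟨n, hn⟩ := h.1 O hO
  obtain ⟨f, hf⟩ := (hc.mono fun _ hn ↦ hn.1 : {n | n ∈ N ∧ x ∈ n ∧ n ⊆ O}.Countable)
    |>.exists_eq_range ⟨n, hn⟩
  refine ⟨f, fun k ↦ (hf ▸ mem_range_self k : f k ∈ _), fun A hA G hG ↦ ?_⟩
  obtain ⟨n, hnN, hxn, hnOG, hinf⟩ := h.2 A hA (O ∩ G) (inter_mem hO hG)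
  obtain ⟨k, rfl⟩ : n ∈ range f := hf ▸ ⟨hnN, hxn, hnOG.trans inter_subset_left⟩
  exact ⟨k, hnOG.trans inter_subset_right, hinf⟩

theorem IsCpSequenceAt.notMem_closure (hf : IsCpSequenceAt f x) {A : Set X}
    (hA : ∀ k, (f k ∩ A).Finite) (hxA : x ∉ A) : x ∉ closure A := fun hx ↦
  let ⟨k, _, hk⟩ := hf A ⟨hx, hxA⟩ univ univ_mem
  hk (hA k)

omit [TopologicalSpace X] in
theorem EventuallyLeaves.finite_inter_range {u : ℕ → X} (hu : EventuallyLeaves f u) (k : ℕ) :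
    (f k ∩ range u).Finite := by
  have hfin : {m | u m ∈ f k}.Finite := by
    simpa [← Nat.cofinite_eq_atTop] using hu k
  refine (hfin.image u).subset ?_
  rintro _ ⟨hm, m, rfl⟩
  exact ⟨m, hm, rfl⟩

theorem IsCpSequenceAt.not_mapClusterPt (hf : IsCpSequenceAt f x) {u : ℕ → X}
    (hu : EventuallyLeaves f u) (hux : ∀ m, u m ≠ x) : ¬MapClusterPt x atTop u := fun hcl ↦
  hf.notMem_closure hu.finite_inter_range (by simpa [eq_comm] using hux)
    (mem_closure_iff_clusterPt.2 (ClusterPt.mono hcl (le_principal_iff.2 range_mem_map)))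

theorem IsCpSequenceAt.notMem_escapingClusterPts (hf : IsCpSequenceAt f x) :
    x ∉ escapingClusterPts f x := fun ⟨_, hu, hux, hcl⟩ ↦ hf.not_mapClusterPt hu hux hcl

omit [TopologicalSpace X] in
/-- The tail of `u k` outside `f 0 ∪ ⋯ ∪ f k` can only meet `f j` for `k < j`. -/
theorem finite_inter_iUnion_tails {S : Set ℕ} {u : ℕ → ℕ → X}
    (hu : ∀ k ∈ S, EventuallyLeaves f (u k)) (j : ℕ) :
    (f j ∩ ⋃ k ∈ S, u k '' {m | ∀ i ≤ k, u k m ∉ f i}).Finite := by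
  have hsub : f j ∩ ⋃ k ∈ S, u k '' {m | ∀ i ≤ k, u k m ∉ f i} ⊆
      ⋃ k ∈ {k | k < j ∧ k ∈ S}, f j ∩ range (u k) := by
    rintro _ ⟨hj, hmem⟩
    obtain ⟨k, hk, m, hm, rfl⟩ := mem_iUnion₂.1 hmem
    have hkj : k < j := lt_of_not_ge fun hjk ↦ hm j hjk hj
    exact mem_biUnion ⟨hkj, hk⟩ ⟨hj, mem_range_self m⟩
  refine Finite.subset (Finite.biUnion ?_ fun k hk ↦ (hu k hk.2).finite_inter_range j) hsub
  exact (finite_lt_nat j).subset fun _ hk ↦ hk.1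

theorem IsCpSequenceAt.notMem_closure_escapingClusterPts (hf : IsCpSequenceAt f x) :
    x ∉ closure (escapingClusterPts f x) := by
  intro hxD
  set S := {k | (f k ∩ escapingClusterPts f x).Nonempty}
  have hS : ∀ k ∈ S, ∃ p ∈ f k, ∃ u : ℕ → X,
      EventuallyLeaves f u ∧ (∀ m, u m ≠ x) ∧ MapClusterPt p atTop u :=
    fun _ ⟨p, hpk, hpD⟩ ↦ ⟨p, hpk, hpD⟩
  have : Nonempty X := ⟨x⟩
  choose! p hp u hu hux hcl using hS
  set B : Set X := ⋃ k ∈ S, u k '' {m | ∀ i ≤ k, u k m ∉ f i}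
  have hxB : x ∉ closure B := by
    refine hf.notMem_closure (finite_inter_iUnion_tails hu) fun hx ↦ ?_
    obtain ⟨k, hk, m, -, hm⟩ := mem_iUnion₂.1 hx
    exact hux k hk m hm
  obtain ⟨k, hkB, hk⟩ := hf _ ⟨hxD, hf.notMem_escapingClusterPts⟩ _
    (isClosed_closure.compl_mem_nhds hxB)
  have hkS : k ∈ S := hk.nonempty
  -- `u k` clusters at `p k ∉ closure B`, yet its tail lies in `B`.
  have htail : ∀ᶠ m in atTop, u k m ∈ B := by
    filter_upwards [(eventually_all_finite (finite_le_nat k)).2 fun i _ ↦ hu k hkS i] with m hm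
    exact mem_biUnion hkS ⟨m, hm, rfl⟩
  obtain ⟨m, hmB, hm⟩ := ((hcl k hkS).frequently
    (isClosed_closure.compl_mem_nhds (hkB (hp k hkS)))).and_eventually htail |>.exists
  exact hmB (subset_closure hm)

theorem exists_subset_biUnion_of_isCompact (hx : x ∈ f 0) {K : Set X} (hK : IsCompact K)
    (hKD : K ⊆ (escapingClusterPts f x)ᶜ) : ∃ m, K ⊆ ⋃ k < m, f k := by
  by_contra! hK'
  choose y hyK hy using fun m ↦ not_subset.1 (hK' (m + 1))
  obtain ⟨q, hqK, hq⟩ :=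
    hK.exists_mapClusterPt (f := atTop) (u := y) (tendsto_principal.2 (.of_forall hyK))
  refine hKD hqK ⟨y, fun k ↦ ?_, fun m hm ↦ hy m (mem_biUnion m.succ_pos (hm ▸ hx)), hq⟩
  filter_upwards [eventually_ge_atTop k] with m hkm hm
  exact hy m (mem_biUnion (Nat.lt_succ_of_le hkm) hm)

end

theorem statement8 {X : Type*} [TopologicalSpace X] (N : Set (Set X)) (x : X)
    (hc : N.Countable) (h : IsCpNetworkAt N x) : IsCkNetworkAt N x := by
  intro O hO
  obtain ⟨f, hfN, hf⟩ := exists_isCpSequenceAt_of_isCpNetworkAt hc h hO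
  refine ⟨_, isClosed_closure.compl_mem_nhds hf.notMem_closure_escapingClusterPts,
    fun K hKU hK ↦ ?_⟩
  obtain ⟨m, hm⟩ := exists_subset_biUnion_of_isCompact (hfN 0).2.1 hK
    (hKU.trans (compl_subset_compl.2 subset_closure))
  have hunion : ⋃₀ ↑((Finset.range m).image f) = ⋃ k < m, f k := by
    simp [sUnion_image]
  refine ⟨(Finset.range m).image f, ?_, ?_, hunion ▸ hm,
    hunion ▸ iUnion₂_subset fun k _ ↦ (hfN k).2.2⟩
  · simpa [Finset.coe_image, image_subset_iff, subset_def] using fun k _ ↦ (hfN k).1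
  · simpa using fun k _ ↦ (hfN k).2.1
end

section
/- Every Fréchet–Urysohn topological group G has property (PS): for every sequence (g_n) in G converging to the identity e, there exist strictly increasing sequences (m_k) and (n_k) of natural numbers such that g_{n_k}^{m_k} → e. -/
open Filter Set Topology Pointwise Bornology

/-! Put `s p q = g (q + p) ^ (p + 1)`; each row `s p` tends to `1`, and it suffices to find
`s (p i) (q i) → 1` with `p i → ∞`. If infinitely many rows hit `1` this is immediate.
Otherwise pick a sequence `t p → 1` avoiding `1`. Then `1` lies in the closure of
`A = {t p * s p q} \ {1}`, whereas the row `q ↦ t p * s p q` converges to `t p ≠ 1`, so no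
finitely many rows of `A` accumulate at `1`. A sequence `u i = t (p i) * s (p i) (q i)` in `A`
tending to `1`, which exists by the Fréchet–Urysohn property, must therefore have `p i → ∞`,
and then `s (p i) (q i) = (t (p i))⁻¹ * u i → 1`. -/

theorem notMem_closure_range_diff_singleton {X : Type*} [TopologicalSpace X] [T2Space X]
    {w : ℕ → X} {a c : X} (hw : Tendsto w atTop (𝓝 c)) (hac : a ≠ c) :
    a ∉ closure (range w \ {a}) := by
  set f : {q // w q ≠ a} → X := fun q => w q
  have hf : Tendsto f cofinite (𝓝 c) :=
    (Nat.cofinite_eq_atTop ▸ hw).comp Subtype.val_injective.tendsto_cofinite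
  have hrange : range f = range w \ {a} := by
    ext x
    constructor
    · rintro ⟨q, rfl⟩
      exact ⟨mem_range_self _, q.2⟩
    · rintro ⟨⟨q, rfl⟩, hq⟩
      exact ⟨⟨q, hq⟩, rfl⟩
  intro ha
  rw [← hrange] at ha
  rcases hf.isCompact_insert_range_of_cofinite.isClosed.closure_subset_iff.2
    (subset_insert _ _) ha with h | ⟨q, hq⟩
  exacts [hac h, q.2 hq]

section FrechetUrysohnGroup

variable {G : Type*} [Group G] [TopologicalSpace G] [IsTopologicalGroup G]

theorem one_mem_closure_iUnion_range_mul_diff_one [T1Space G]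
    {t : ℕ → G} (ht : Tendsto t atTop (𝓝 1)) (ht1 : ∀ p, t p ≠ 1)
    {s : ℕ → ℕ → G} (hs : ∀ p, Tendsto (s p) atTop (𝓝 1)) :
    (1 : G) ∈ closure (⋃ p, range (fun q => t p * s p q) \ {1}) := by
  rw [mem_closure_iff_nhds]
  intro U hU
  obtain ⟨V, hVo, hV1, hVU⟩ := exists_open_nhds_one_mul_subset hU
  obtain ⟨p, hp⟩ := (ht.eventually_mem (hVo.mem_nhds hV1)).exists
  have hne : ∀ᶠ q in atTop, t p * s p q ≠ 1 :=
    ((hs p).const_mul (t p)).eventually_ne (by simpa using ht1 p)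
  obtain ⟨q, hq, hq1⟩ := (((hs p).eventually_mem (hVo.mem_nhds hV1)).and hne).exists
  exact ⟨t p * s p q, hVU (mul_mem_mul hp hq), mem_iUnion.2 ⟨p, ⟨q, rfl⟩, hq1⟩⟩

theorem exists_tendsto_diag_of_tendsto_ne_one [T2Space G] [FrechetUrysohnSpace G]
    {t : ℕ → G} (ht : Tendsto t atTop (𝓝 1)) (ht1 : ∀ p, t p ≠ 1)
    {s : ℕ → ℕ → G} (hs : ∀ p, Tendsto (s p) atTop (𝓝 1)) :
    ∃ p q : ℕ → ℕ, Tendsto p atTop atTop ∧ Tendsto (fun i => s (p i) (q i)) atTop (𝓝 1) := by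
  set S : ℕ → Set G := fun p => range (fun q => t p * s p q) \ {1}
  obtain ⟨u, huS, hu⟩ := mem_closure_iff_seq_limit.1
    (one_mem_closure_iUnion_range_mul_diff_one ht ht1 hs)
  choose p hp using fun i => mem_iUnion.1 (huS i)
  choose q hq using fun i => (hp i).1
  have hp_tendsto : Tendsto p atTop atTop := by
    refine tendsto_atTop.2 fun B => ?_
    have h1 : (1 : G) ∉ closure (⋃ r < B, S r) := by
      simp only [closure_iUnion₂_lt_nat, mem_iUnion, not_exists]
      exact fun r _ => notMem_closure_range_diff_singleton
        ((hs r).const_mul (t r)) (by simpa using (ht1 r).symm)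
    filter_upwards [hu.eventually (isClosed_closure.compl_mem_nhds h1)] with i hi
    by_contra! hlt
    exact hi (subset_closure (mem_biUnion hlt (hp i)))
  refine ⟨p, q, hp_tendsto, ?_⟩
  have h := (ht.comp hp_tendsto).inv.mul hu
  simp only [inv_one, mul_one] at h
  refine h.congr fun i => ?_
  simp [← hq i]

theorem exists_tendsto_diag [T2Space G] [FrechetUrysohnSpace G]
    {s : ℕ → ℕ → G} (hs : ∀ p, Tendsto (s p) atTop (𝓝 1)) :
    ∃ p q : ℕ → ℕ, Tendsto p atTop atTop ∧ Tendsto (fun i => s (p i) (q i)) atTop (𝓝 1) := by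
  by_cases h : ∃ᶠ p in atTop, ∃ q, s p q = 1
  · obtain ⟨p, hp, hpq⟩ := extraction_of_frequently_atTop h
    choose q hq using hpq
    exact ⟨p, q, hp.tendsto_atTop, by simp [hq]⟩
  · obtain ⟨P, hP⟩ := eventually_atTop.1 (not_frequently.1 h)
    obtain ⟨p, q, hp, hpq⟩ := exists_tendsto_diag_of_tendsto_ne_one (hs P)
      (fun q hq => hP P le_rfl ⟨q, hq⟩) (s := fun p => s (p + P)) (fun p => hs _)
    exact ⟨fun i => p i + P, q, tendsto_atTop_mono (fun i => Nat.le_add_right _ _) hp, hpq⟩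

end FrechetUrysohnGroup

theorem exists_strictMono_tendsto_of_tendsto_atTop {X : Type*} {F : ℕ → ℕ → X} {l : Filter X}
    {a b : ℕ → ℕ} (ha : Tendsto a atTop atTop) (hb : Tendsto b atTop atTop)
    (hF : Tendsto (fun i => F (a i) (b i)) atTop l) :
    ∃ m n : ℕ → ℕ, StrictMono m ∧ StrictMono n ∧ Tendsto (fun k => F (n k) (m k)) atTop l := by
  obtain ⟨φ, hφ, haφ⟩ := strictMono_subseq_of_tendsto_atTop ha
  obtain ⟨ψ, hψ, hbψ⟩ := strictMono_subseq_of_tendsto_atTop (hb.comp hφ.tendsto_atTop)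
  exact ⟨b ∘ φ ∘ ψ, a ∘ φ ∘ ψ, hbψ, haφ.comp hψ, hF.comp (hφ.comp hψ).tendsto_atTop⟩

theorem statement9 {G : Type*} [Group G] [TopologicalSpace G] [IsTopologicalGroup G]
    [T2Space G] [FrechetUrysohnSpace G]
    (g : ℕ → G) (hg : Tendsto g atTop (nhds (1 : G))) :
    ∃ m n : ℕ → ℕ, StrictMono m ∧ StrictMono n ∧
      Tendsto (fun k => g (n k) ^ (m k)) atTop (nhds (1 : G)) := by
  have hrows : ∀ p, Tendsto (fun q => g (q + p) ^ (p + 1)) atTop (𝓝 1) := fun p => by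
    simpa using (hg.comp (tendsto_add_atTop_nat p)).pow (p + 1)
  obtain ⟨p, q, hp, hpq⟩ := exists_tendsto_diag hrows
  exact exists_strictMono_tendsto_of_tendsto_atTop (F := fun n m => g n ^ m)
    (tendsto_atTop_mono (fun i => Nat.le_add_left _ _) hp)
    (tendsto_atTop_mono (fun i => Nat.le_succ _) hp) hpq
end

section
/- Let E be a topological vector space with a fundamental sequence of bounded sets (an increasing sequence (B_n) of bounded sets such that every bounded set is contained in some B_n). If E has property (PS) (for every sequence x_n → 0 there exist strictly increasing (m_k), (n_k) with m_k · x_{n_k} → 0), then E has a countable cs*-network at 0, namely the family { (1/k) B_n : k, n ∈ ℕ } with the B_n closed absolutely convex. -/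
open Filter Set Topology Pointwise Bornology

/-! The sequence `m k • u (n k)` given by (PS) converges, so its range is bounded and lies in
some `B N`. Since `B N` is bounded, `K⁻¹ • B N ⊆ O` for all large `K`, and since `B N` is
balanced, `u (n k) ∈ (m k)⁻¹ • B N ⊆ K⁻¹ • B N` as soon as `m k ≥ K`, which holds for all but
finitely many `k`. -/

theorem Bornology.IsVonNBounded.eventually_inv_natCast_smul_subset {𝕜 E : Type*} [RCLike 𝕜]
    [AddCommGroup E] [Module 𝕜 E] [TopologicalSpace E] {S O : Set E} (hS : IsVonNBounded 𝕜 S)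
    (hO : O ∈ 𝓝 0) : ∀ᶠ K : ℕ in atTop, (K : 𝕜)⁻¹ • S ⊆ O :=
  (tendsto_inv_atTop_nhds_zero_nat.eventually
    ((hS hO).eventually_nhds_zero (mem_of_mem_nhds hO))).mono fun _ h => h.image_subset

theorem Set.infinite_setOf_of_eventually_strictMono {p : ℕ → Prop} {n : ℕ → ℕ}
    (hn : StrictMono n) (h : ∀ᶠ k in atTop, p (n k)) : {j | p j}.Infinite :=
  Nat.frequently_atTop_iff_infinite.1 (hn.tendsto_atTop.frequently h.frequently)

theorem statement10_general {E : Type*} [AddCommGroup E] [Module ℝ E] [TopologicalSpace E]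
    [IsTopologicalAddGroup E] [ContinuousSMul ℝ E]
    (B : ℕ → Set E)
    (hbdd : ∀ n, Bornology.IsVonNBounded ℝ (B n))
    (hfund : ∀ S : Set E, Bornology.IsVonNBounded ℝ S → ∃ n, S ⊆ B n)
    (hbal : ∀ n, Balanced ℝ (B n))
    (hPS : ∀ x : ℕ → E, Tendsto x atTop (nhds 0) →
      ∃ m n : ℕ → ℕ, StrictMono m ∧ StrictMono n ∧
        Tendsto (fun k => (m k : ℝ) • x (n k)) atTop (nhds 0)) :
    IsCsStarNetworkAt {S : Set E | ∃ k n : ℕ, 1 ≤ k ∧ S = ((k : ℝ)⁻¹) • B n} (0 : E) := by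
  intro u hu O hO
  obtain ⟨m, n, hm, hn, hmn⟩ := hPS u hu
  obtain ⟨N, hN⟩ := hfund _ (hmn.isVonNBounded_range ℝ)
  obtain ⟨K, hKO, hK1⟩ :=
    ((hbdd N).eventually_inv_natCast_smul_subset hO |>.and (eventually_ge_atTop 1)).exists
  have hK0 : (K : ℝ) ≠ 0 := by positivity
  have hmem : ∀ᶠ k in atTop, u (n k) ∈ (K : ℝ)⁻¹ • B N :=
    (hm.tendsto_atTop.eventually_ge_atTop K).mono fun k hk =>
      (mem_inv_smul_set_iff₀ hK0 _ _).2 ((hbal N).smul_mem_mono (hN ⟨k, rfl⟩) (by simpa using hk))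
  have hzero : (0 : E) ∈ B N := (hbal N).zero_mem ⟨_, hN ⟨0, rfl⟩⟩
  exact ⟨_, ⟨K, N, hK1, rfl⟩, zero_mem_smul_set hzero, hKO,
    infinite_setOf_of_eventually_strictMono hn hmem⟩

theorem statement10 {E : Type*} [AddCommGroup E] [Module ℝ E] [TopologicalSpace E]
    [IsTopologicalAddGroup E] [ContinuousSMul ℝ E]
    (B : ℕ → Set E) (hmono : Monotone B)
    (hbdd : ∀ n, Bornology.IsVonNBounded ℝ (B n))
    (hfund : ∀ S : Set E, Bornology.IsVonNBounded ℝ S → ∃ n, S ⊆ B n)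
    (hclosed : ∀ n, IsClosed (B n)) (hbal : ∀ n, Balanced ℝ (B n))
    (hconv : ∀ n, Convex ℝ (B n))
    (hPS : ∀ x : ℕ → E, Tendsto x atTop (nhds 0) →
      ∃ m n : ℕ → ℕ, StrictMono m ∧ StrictMono n ∧
        Tendsto (fun k => (m k : ℝ) • x (n k)) atTop (nhds 0)) :
    IsCsStarNetworkAt {S : Set E | ∃ k n : ℕ, 1 ≤ k ∧ S = ((k : ℝ)⁻¹) • B n} (0 : E) :=
  statement10_general B hbdd hfund hbal hPS
end

section
/- A topological vector space E that is Fréchet–Urysohn and admits a fundamental sequence of bounded sets is locally bounded, i.e., has a bounded neighborhood of zero (equivalently, E is p-normable for some 0 < p ≤ 1). -/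
/-!
Suppose no neighbourhood of `0` is bounded. Then every bounded set `S` has `0` in the closure
of its complement, so `0` is the limit of a sequence avoiding `S`. Choose nonzero `xₙ → 0` and,
for each `n`, a sequence `yₙₖ → 0` (as `k → ∞`) outside `Bₙ ∪ {-xₙ}`. Nyikos' diagonal argument
in the Fréchet–Urysohn group `E` gives `nⱼ → ∞` and `kⱼ` with `y_{nⱼ kⱼ} → 0`. This convergent
sequence is bounded, hence contained in some `B_m`, although `y_{nⱼ kⱼ} ∉ B_{nⱼ} ⊇ B_m` for
large `j`.
-/

open Filter Set Topology Pointwise Bornology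

theorem Filter.Tendsto.closure_range_subset_insert {X : Type*} [TopologicalSpace X] [T2Space X]
    {u : ℕ → X} {x : X} (hu : Tendsto u atTop (𝓝 x)) :
    closure (range u) ⊆ insert x (range u) :=
  closure_minimal (subset_insert _ _) hu.isCompact_insert_range.isClosed

/-- Nyikos' diagonal argument: `0` lies in the closure of `{xₙ + yₙₖ}`, and a sequence there
tending to `0` meets each row `n` only finitely often, as otherwise `-xₙ ≠ 0` would be a cluster
point of `(yₙₖ)ₖ`. -/
theorem exists_diagonal_tendsto_zero {G : Type*} [AddGroup G] [TopologicalSpace G]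
    [IsTopologicalAddGroup G] [T2Space G] [FrechetUrysohnSpace G]
    {x : ℕ → G} (hx : Tendsto x atTop (𝓝 0)) (hx0 : ∀ n, x n ≠ 0)
    {y : ℕ → ℕ → G} (hy : ∀ n, Tendsto (y n) atTop (𝓝 0)) (hyx : ∀ n k, y n k ≠ -x n) :
    ∃ n k : ℕ → ℕ, Tendsto n atTop atTop ∧ Tendsto (fun j ↦ y (n j) (k j)) atTop (𝓝 0) := by
  set A : Set G := {z | ∃ n k, x n + y n k = z}
  have hxA (n : ℕ) : x n ∈ closure A := by
    refine mem_closure_of_tendsto (b := atTop) (f := fun k ↦ x n + y n k) ?_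
      (.of_forall fun k ↦ ⟨n, k, rfl⟩)
    simpa using (hy n).const_add (x n)
  obtain ⟨a, haA, ha⟩ := mem_closure_iff_seq_limit.1 <|
    closure_closure (s := A) ▸ mem_closure_of_tendsto hx (.of_forall hxA)
  choose n k hnk using haA
  have hfiber (N : ℕ) : ∀ᶠ j in atTop, n j ≠ N := by
    have hout : -x N ∉ closure (range (y N)) := fun h ↦
      ((hy N).closure_range_subset_insert h).elim (fun h0 ↦ hx0 N (neg_eq_zero.1 h0))
        fun ⟨i, hi⟩ ↦ hyx N i hi
    have hlim : Tendsto (fun j ↦ -x N + a j) atTop (𝓝 (-x N)) := by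
      simpa using ha.const_add (-x N)
    filter_upwards [hlim.eventually (isClosed_closure.isOpen_compl.mem_nhds hout)]
      with j hj hjN
    refine hj (subset_closure ⟨k j, ?_⟩)
    rw [← hnk j, hjN, neg_add_cancel_left]
  have hn : Tendsto n atTop atTop := tendsto_atTop.2 fun b ↦ by
    filter_upwards [(eventually_all_finite (finite_Iio b)).2 fun N _ ↦ hfiber N] with j hj
    exact not_lt.1 fun hlt ↦ hj _ hlt rfl
  have hdiag (j : ℕ) : y (n j) (k j) = -x (n j) + a j := by
    rw [← hnk j, neg_add_cancel_left]
  refine ⟨n, k, hn, ?_⟩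
  simpa only [hdiag, Function.comp_apply, neg_zero, zero_add] using ((hx.comp hn).neg).add ha

theorem statement11 {E : Type*} [AddCommGroup E] [Module ℝ E] [TopologicalSpace E]
    [IsTopologicalAddGroup E] [ContinuousSMul ℝ E] [T2Space E] [FrechetUrysohnSpace E]
    (B : ℕ → Set E) (hmono : Monotone B)
    (hbdd : ∀ n, Bornology.IsVonNBounded ℝ (B n))
    (hfund : ∀ S : Set E, Bornology.IsVonNBounded ℝ S → ∃ n, S ⊆ B n) :
    ∃ U ∈ nhds (0 : E), Bornology.IsVonNBounded ℝ U := by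
  by_contra! hcon
  have avoid (S : Set E) (hS : IsVonNBounded ℝ S) :
      ∃ u : ℕ → E, (∀ k, u k ∉ S) ∧ Tendsto u atTop (𝓝 0) := by
    refine (mem_closure_iff_seq_limit (s := Sᶜ)).1 ?_
    rw [closure_compl, mem_compl_iff, mem_interior_iff_mem_nhds]
    exact fun h ↦ hcon S h hS
  obtain ⟨x, hx0, hx⟩ := avoid {0} (isVonNBounded_singleton 0)
  choose y hyB hy using fun n ↦ avoid (B n ∪ {-x n}) ((hbdd n).union (isVonNBounded_singleton _))
  obtain ⟨n, k, hn, hdiag⟩ :=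
    exists_diagonal_tendsto_zero hx hx0 hy fun n k h ↦ hyB n k (Or.inr h)
  obtain ⟨m, hm⟩ := hfund _ (hdiag.isVonNBounded_range ℝ)
  obtain ⟨j, hj⟩ := (hn.eventually_ge_atTop m).exists
  exact hyB (n j) (k j) (Or.inl (hmono hj (hm ⟨j, rfl⟩)))
end

section
/- Let E be a metrizable topological vector space with a decreasing base (U_n) of balanced neighborhoods of zero and a fundamental increasing sequence (B_n) of balanced bounded sets. Then some B_n is a neighborhood of zero; consequently E is locally bounded. (Key step: if U_n ⊄ n·B_n for all n, choosing (1/n)·x_n ∈ U_n \ B_n gives a bounded set {(1/n)x_n : n ∈ ℕ} not contained in any B_n, a contradiction.) -/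
open Filter Set Topology Pointwise Bornology

/-! A null sequence `y` with `y n` chosen in the `n`-th member of a countable decreasing base at
`0` but outside `B n` has bounded range, yet that range lies in no `B n`. -/

theorem Filter.exists_seq_tendsto_forall_notMem {α : Type*} {l : Filter α}
    [l.IsCountablyGenerated] {B : ℕ → Set α} (hB : ∀ n, B n ∉ l) :
    ∃ y : ℕ → α, Tendsto y atTop l ∧ ∀ n, y n ∉ B n := by
  obtain ⟨V, hV⟩ := l.exists_antitone_basis
  have hVB : ∀ n, ∃ y ∈ V n, y ∉ B n := fun n =>
    not_subset.1 fun hsub => hB n (mem_of_superset (hV.mem n) hsub)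
  choose y hyV hyB using hVB
  exact ⟨y, hV.tendsto hyV, hyB⟩

theorem exists_mem_nhds_zero_of_forall_isVonNBounded_subset {𝕜 E : Type*} [NormedField 𝕜]
    [AddCommGroup E] [Module 𝕜 E] [TopologicalSpace E] [IsTopologicalAddGroup E]
    [ContinuousSMul 𝕜 E] [(𝓝 (0 : E)).IsCountablyGenerated] {B : ℕ → Set E}
    (hB : ∀ S : Set E, IsVonNBounded 𝕜 S → ∃ n, S ⊆ B n) :
    ∃ n, B n ∈ 𝓝 (0 : E) := by
  by_contra! hB_nhds
  obtain ⟨y, hy, hyB⟩ := exists_seq_tendsto_forall_notMem hB_nhds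
  obtain ⟨m, hm⟩ := hB _ (hy.isVonNBounded_range 𝕜)
  exact hyB m (hm (mem_range_self m))

theorem statement12_general {E : Type*} [AddCommGroup E] [Module ℝ E] [TopologicalSpace E]
    [IsTopologicalAddGroup E] [ContinuousSMul ℝ E]
    (U : ℕ → Set E)
    (hUnhds : ∀ n, U n ∈ nhds (0 : E))
    (hUbase : ∀ O ∈ nhds (0 : E), ∃ n, U n ⊆ O)
    (B : ℕ → Set E)
    (hfund : ∀ S : Set E, Bornology.IsVonNBounded ℝ S → ∃ n, S ⊆ B n) :
    ∃ n, B n ∈ nhds (0 : E) := by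
  have hU : (𝓝 (0 : E)).HasBasis (fun _ => True) U :=
    ⟨fun O => ⟨fun hO => (hUbase O hO).imp fun _ hn => ⟨trivial, hn⟩,
      fun ⟨n, _, hn⟩ => mem_of_superset (hUnhds n) hn⟩⟩
  have := hU.isCountablyGenerated
  exact exists_mem_nhds_zero_of_forall_isVonNBounded_subset hfund

theorem statement12 {E : Type*} [AddCommGroup E] [Module ℝ E] [TopologicalSpace E]
    [IsTopologicalAddGroup E] [ContinuousSMul ℝ E] [T2Space E]
    (U : ℕ → Set E) (hUdec : Antitone U) (hUbal : ∀ n, Balanced ℝ (U n))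
    (hUnhds : ∀ n, U n ∈ nhds (0 : E))
    (hUbase : ∀ O ∈ nhds (0 : E), ∃ n, U n ⊆ O)
    (B : ℕ → Set E) (hmono : Monotone B) (hBbal : ∀ n, Balanced ℝ (B n))
    (hbdd : ∀ n, Bornology.IsVonNBounded ℝ (B n))
    (hfund : ∀ S : Set E, Bornology.IsVonNBounded ℝ S → ∃ n, S ⊆ B n) :
    ∃ n, B n ∈ nhds (0 : E) :=
  statement12_general U hUnhds hUbase B hfund
end

section
/- Let G be a topological group and 𝒟 a countable ck-network at the identity e that is closed under finite products (pointwise set products), and let {g_n : n ∈ ℕ} be dense in G. Then the countable family { g_n · D_m : n, m ∈ ℕ } is a ck-network at every point of G. -/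
/-!
Translating by `x` reduces the claim to the identity, with the dense set `x⁻¹ • S`. Given `O`,
take `W` with `W³ ⊆ O` and let `U` be the neighbourhood the `ck`-property of `𝒟` yields for `W`.
Pick `t ∈ x⁻¹ • S` close to `1`, so that `t⁻¹ ∈ E ⊆ W` for some `E ∈ 𝒟` containing `1`. For a
compact `K` near `1`, cover `t⁻¹ • K` by members `D ∋ 1` of `𝒟` inside `W`: the sets `t • (D * E)`
contain `1 = t • (1 * t⁻¹)`, cover `K`, and lie in `W³ ⊆ O`.
-/

open Filter Set Topology Pointwise Bornology

namespace IsCkNetworkAt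

variable {X Y : Type*} [TopologicalSpace X] [TopologicalSpace Y]

theorem mono {N N' : Set (Set X)} {x : X} (h : IsCkNetworkAt N x) (hNN' : N ⊆ N') :
    IsCkNetworkAt N' x := by
  intro O hO
  obtain ⟨U, hU, hcover⟩ := h O hO
  refine ⟨U, hU, fun K hKU hK => ?_⟩
  obtain ⟨F, hFN, hFx, hKF, hFO⟩ := hcover K hKU hK
  exact ⟨F, hFN.trans hNN', hFx, hKF, hFO⟩

theorem image {N : Set (Set X)} {x : X} (h : IsCkNetworkAt N x) (e : X ≃ₜ Y) :
    IsCkNetworkAt ((e '' ·) '' N) (e x) := by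
  classical
  intro O hO
  obtain ⟨U, hU, hcover⟩ := h (e ⁻¹' O) (e.continuous.continuousAt hO)
  refine ⟨e '' U, e.isOpenMap.image_mem_nhds hU, fun K hKU hK => ?_⟩
  have hKU' : e ⁻¹' K ⊆ U := by
    simpa only [e.preimage_image] using Set.preimage_mono (f := e) hKU
  obtain ⟨F, hFN, hFx, hKF, hFO⟩ := hcover (e ⁻¹' K) hKU' (e.isCompact_preimage.2 hK)
  refine ⟨F.image (e '' ·), ?_, ?_, ?_, ?_⟩
  · rw [Finset.coe_image]
    exact Set.image_mono hFN
  · simp only [Finset.mem_image]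
    rintro _ ⟨f, hf, rfl⟩
    exact Set.mem_image_of_mem e (hFx f hf)
  · intro y hy
    obtain ⟨f, hf, hyf⟩ := hKF (show e.symm y ∈ e ⁻¹' K by simpa using hy)
    exact ⟨e '' f, Finset.mem_image_of_mem _ hf, ⟨e.symm y, hyf, e.apply_symm_apply y⟩⟩
  · rintro _ ⟨_, hf, hy⟩
    obtain ⟨f, hfF, rfl⟩ := Finset.mem_image.1 hf
    obtain ⟨z, hz, rfl⟩ := hy
    exact hFO ⟨f, hfF, hz⟩

end IsCkNetworkAt

theorem exists_mem_of_forall_isCompact_subset {X : Type*} [TopologicalSpace X]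
    {N : Set (Set X)} {x y : X} {U O : Set X}
    (hcover : ∀ K : Set X, K ⊆ U → IsCompact K →
      ∃ F : Finset (Set X), ↑F ⊆ N ∧ (∀ f ∈ F, x ∈ f) ∧
        K ⊆ ⋃₀ ↑F ∧ ⋃₀ (↑F : Set (Set X)) ⊆ O)
    (hy : y ∈ U) : ∃ E ∈ N, x ∈ E ∧ y ∈ E ∧ E ⊆ O := by
  obtain ⟨F, hFN, hFx, hyF, hFO⟩ :=
    hcover {y} (singleton_subset_iff.2 hy) isCompact_singleton
  obtain ⟨E, hEF, hyE⟩ := hyF rfl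
  exact ⟨E, hFN hEF, hFx E hEF, hyE, fun z hz => hFO ⟨E, hEF, hz⟩⟩

section TopologicalGroup

variable {G : Type*} [Group G] [TopologicalSpace G] [IsTopologicalGroup G]

theorem isCkNetworkAt_one_smul_of_dense {𝒟 : Set (Set G)} (hck : IsCkNetworkAt 𝒟 (1 : G))
    (hprod : ∀ A ∈ 𝒟, ∀ B ∈ 𝒟, A * B ∈ 𝒟) {T : Set G} (hT : Dense T) :
    IsCkNetworkAt {N : Set G | ∃ t ∈ T, ∃ D ∈ 𝒟, N = t • D} 1 := by
  classical
  intro O hO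
  obtain ⟨W, hW, hWO⟩ := exists_nhds_one_split4 hO
  obtain ⟨U, hU, hcover⟩ := hck W hW
  obtain ⟨V₀, hV₀, hV₀U⟩ := exists_nhds_split_inv hU
  set V := W ∩ V₀⁻¹
  have hV : V ∈ 𝓝 (1 : G) := inter_mem hW (inv_mem_nhds_one G hV₀)
  have hVU : ∀ a ∈ V, ∀ b ∈ V, a⁻¹ * b ∈ U := fun a ha b hb => by
    simpa using hV₀U _ ha.2 _ hb.2
  obtain ⟨t, htT, htV⟩ := hT.inter_nhds_nonempty hV
  obtain ⟨E, hE𝒟, hE1, htE, hEW⟩ :=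
    exists_mem_of_forall_isCompact_subset hcover (by simpa using hVU t htV 1 (mem_of_mem_nhds hV))
  refine ⟨V, hV, fun K hKV hK => ?_⟩
  have htK : t⁻¹ • K ⊆ U := by
    rintro _ ⟨k, hk, rfl⟩
    exact hVU t htV k (hKV hk)
  obtain ⟨F, hF𝒟, hF1, hKF, hFW⟩ := hcover (t⁻¹ • K) htK (hK.smul t⁻¹)
  refine ⟨F.image (fun D => t • (D * E)), ?_, ?_, ?_, ?_⟩
  · rw [Finset.coe_image]
    rintro _ ⟨D, hD, rfl⟩
    exact ⟨t, htT, D * E, hprod D (hF𝒟 hD) E hE𝒟, rfl⟩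
  · simp only [Finset.mem_image]
    rintro _ ⟨D, hD, rfl⟩
    exact ⟨1 * t⁻¹, Set.mul_mem_mul (hF1 D hD) htE, by simp⟩
  · intro k hk
    obtain ⟨D, hD, hkD⟩ := hKF (Set.smul_mem_smul_set hk)
    refine ⟨t • (D * E), Finset.mem_image_of_mem _ hD, t⁻¹ • k * 1, ?_, by simp⟩
    exact Set.mul_mem_mul hkD hE1
  · rintro _ ⟨_, hf, hy⟩
    obtain ⟨D, hD, rfl⟩ := Finset.mem_image.1 hf
    obtain ⟨_, ⟨d, hd, e, he, rfl⟩, rfl⟩ := hy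
    simpa [mul_assoc] using
      hWO htV.1 (hFW ⟨D, hD, hd⟩) (hEW he) (mem_of_mem_nhds hW)

end TopologicalGroup

theorem statement18_general {G : Type*} [Group G] [TopologicalSpace G] [IsTopologicalGroup G]
    (𝒟 : Set (Set G)) (hck : IsCkNetworkAt 𝒟 (1 : G))
    (hprod : ∀ A ∈ 𝒟, ∀ B ∈ 𝒟, A * B ∈ 𝒟)
    (S : Set G) (hSd : Dense S) :
    ∀ x : G, IsCkNetworkAt {N : Set G | ∃ s ∈ S, ∃ D ∈ 𝒟, N = s • D} x := by
  intro x
  have hx := (isCkNetworkAt_one_smul_of_dense hck hprod (hSd.smul x⁻¹)).image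
    (Homeomorph.smul x)
  rw [Homeomorph.smul_apply, smul_eq_mul, mul_one] at hx
  refine hx.mono ?_
  rintro _ ⟨_, ⟨_, ⟨s, hs, rfl⟩, D, hD, rfl⟩, rfl⟩
  refine ⟨s, hs, D, hD, ?_⟩
  show (x • ·) '' ((x⁻¹ • s) • D) = s • D
  rw [Set.image_smul, smul_smul, smul_eq_mul, mul_inv_cancel_left]

theorem statement18 {G : Type*} [Group G] [TopologicalSpace G] [IsTopologicalGroup G]
    (𝒟 : Set (Set G)) (hc : 𝒟.Countable) (hck : IsCkNetworkAt 𝒟 (1 : G))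
    (hprod : ∀ A ∈ 𝒟, ∀ B ∈ 𝒟, A * B ∈ 𝒟)
    (S : Set G) (hSc : S.Countable) (hSd : Dense S) :
    ∀ x : G, IsCkNetworkAt {N : Set G | ∃ s ∈ S, ∃ D ∈ 𝒟, N = s • D} x :=
  statement18_general 𝒟 hck hprod S hSd
end
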